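/- arXiv:1907.10583 — 7 statements merged into one kernel-verified Lean document; each statement's English description precedes it below -/
import Mathlib

section
/- Let V be a finite nonempty type, Ω the set of configurations η : V →₀ ℕ. Let c : Ω × Ω → ℝ be jump rates with c(η,η') ≥ 0, c(η,η) = 0, for each η the set {η' : c(η,η') ≠ 0} finite, and conserving particle number (c(η,η') ≠ 0 implies |η| = |η'|). Define the generator ℒ on f : Ω → ℝ by (ℒf)(η) := Σ_{η'} c(η,η')·(f(η') − f(η)). Let ν : Ω → ℝ be strictly positive and reversible for ℒ, i.e. ν(η)·c(η,η') = ν(η')·c(η',η) for all η, η'. Then ℒ commutes with the annihilation operator 𝒜 (i.e. ℒ∘𝒜 = 𝒜∘ℒ) if and only if the function D(ξ,η) := F(ξ,η)/ν(ξ) is a self-duality function for ℒ, i.e. for all ξ, η ∈ Ω: Σ_{ξ'} c(ξ,ξ')·(D(ξ',η) − D(ξ,η)) = Σ_{η'} c(η,η')·(D(ξ,η') − D(ξ,η)). -/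
/-- The annihilation operator on functions of configurations. -/
noncomputable def ann {V : Type*} (f : (V →₀ ℕ) → ℝ) : (V →₀ ℕ) → ℝ :=
  fun η => ∑ x ∈ η.support, (η x : ℝ) * f (η - Finsupp.single x 1)

/-- `F ξ η = ∏_{x ∈ supp ξ} C(η x, ξ x)`. -/
def Ffun {V : Type*} (ξ η : V →₀ ℕ) : ℕ := ∏ x ∈ ξ.support, Nat.choose (η x) (ξ x)

/-- The Markov generator associated to jump rates `c`. -/
noncomputable def gen {V : Type*} (c : (V →₀ ℕ) → (V →₀ ℕ) → ℝ)
    (f : (V →₀ ℕ) → ℝ) : (V →₀ ℕ) → ℝ :=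
  fun η => ∑ᶠ η', c η η' * (f η' - f η)

/-!
Write `|η| = η.degree` for the number of particles. Since
`η_x * C(η_x - 1, k) = (η_x - k) * C(η_x, k)`, annihilation acts on `F(ξ, ·)` as multiplication
by `|·| - |ξ|`. Write `G(ξ, η) = ℒ_η D(ξ, η) - ℒ_ξ D(ξ, η)` for the defect of
self-duality. As `ℒ` preserves particle number, this gives
`[ℒ, 𝒜] D(ξ, ·) = (|·| - |ξ|) G(ξ, ·) - 𝒜 G(ξ, ·)`.
When `|η| ≤ |ξ|` we have `D(ξ, η) = δ_{ξη} / ν(ξ)`, and reversibility gives `G(ξ, η) = 0`. So if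
`ℒ` and `𝒜` commute, `G = 0` by induction on `|η|`. Conversely, if `G = 0` then `[ℒ, 𝒜]` kills
every `D(ξ, ·)`. Restricted to the `n`-particle sector these span all functions, and
`[ℒ, 𝒜] f (η)` only depends on `f` on the `(|η| - 1)`-particle sector.
-/

open Finset

lemma Nat.cast_mul_choose_sub_one {R : Type*} [CommRing R] (n k : ℕ) :
    (n : R) * (n - 1).choose k = ((n : R) - k) * n.choose k := by
  rcases n with _ | m
  · rcases k with _ | k <;> simp
  · rcases le_or_gt k (m + 1) with hk | hk
    · have h := congrArg (Nat.cast : ℕ → R) (Nat.choose_mul_succ_eq m k)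
      push_cast [Nat.cast_sub hk] at h
      simp only [Nat.add_sub_cancel, Nat.cast_add, Nat.cast_one]
      linear_combination h
    · simp [Nat.choose_eq_zero_of_lt hk, Nat.choose_eq_zero_of_lt (Nat.lt_of_succ_lt hk)]

namespace Finsupp

variable {V : Type*}

lemma degree_tsub_single_add_one {η : V →₀ ℕ} {x : V} (hx : x ∈ η.support) :
    (η - single x 1).degree + 1 = η.degree := by
  have hle : single x 1 ≤ η := single_le_iff.2 (Nat.one_le_iff_ne_zero.2 (mem_support_iff.1 hx))
  have h := congrArg degree (tsub_add_cancel_of_le hle)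
  rwa [map_add, degree_single] at h

lemma eq_of_le_of_degree_le {ξ η : V →₀ ℕ} (hle : ξ ≤ η) (h : η.degree ≤ ξ.degree) : ξ = η := by
  have h0 : (η - ξ).degree = 0 := by
    have := congrArg degree (add_tsub_cancel_of_le hle)
    rw [map_add] at this
    omega
  exact le_antisymm hle (tsub_eq_zero_iff_le.1 ((degree_eq_zero_iff _).1 h0))

end Finsupp

section Configurations

variable {V : Type*}

lemma Ffun_eq_prod_of_subset {ξ : V →₀ ℕ} {s : Finset V} (hs : ξ.support ⊆ s) (η : V →₀ ℕ) :
    Ffun ξ η = ∏ y ∈ s, (η y).choose (ξ y) :=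
  prod_subset hs fun y _ hy => by simp [Finsupp.notMem_support_iff.1 hy]

lemma Ffun_self (ξ : V →₀ ℕ) : Ffun ξ ξ = 1 :=
  prod_eq_one fun _ _ => Nat.choose_self _

lemma Ffun_eq_zero_of_not_le {ξ η : V →₀ ℕ} (h : ¬ ξ ≤ η) : Ffun ξ η = 0 := by
  obtain ⟨x, hx, hlt⟩ : ∃ x ∈ ξ.support, η x < ξ x := by simpa [Finsupp.le_iff] using h
  exact prod_eq_zero hx (Nat.choose_eq_zero_of_lt hlt)

open scoped Classical in
lemma Ffun_eq_ite_of_degree_le {ξ η : V →₀ ℕ} (h : η.degree ≤ ξ.degree) :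
    Ffun ξ η = if ξ = η then 1 else 0 := by
  split_ifs with he
  · rw [he, Ffun_self]
  · exact Ffun_eq_zero_of_not_le fun hle => he (Finsupp.eq_of_le_of_degree_le hle h)

lemma mul_Ffun_tsub_single (ξ η : V →₀ ℕ) (x : V) :
    (η x : ℝ) * Ffun ξ (η - Finsupp.single x 1) = ((η x : ℝ) - ξ x) * Ffun ξ η := by
  classical
  have hs : ξ.support ⊆ insert x ξ.support := subset_insert _ _
  have hx : x ∈ insert x ξ.support := mem_insert_self _ _
  have hrest : ∀ y ∈ (insert x ξ.support).erase x,
      ((η - Finsupp.single x 1 : V →₀ ℕ) y).choose (ξ y) = (η y).choose (ξ y) := fun y hy => by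
    rw [Finsupp.tsub_apply, Finsupp.single_eq_of_ne (ne_of_mem_erase hy), Nat.sub_zero]
  rw [Ffun_eq_prod_of_subset hs, Ffun_eq_prod_of_subset hs, ← mul_prod_erase _ _ hx,
    ← mul_prod_erase _ _ hx, prod_congr rfl hrest, Finsupp.tsub_apply, Finsupp.single_eq_same]
  push_cast
  rw [← mul_assoc, ← mul_assoc, Nat.cast_mul_choose_sub_one]

lemma ann_Ffun (ξ η : V →₀ ℕ) :
    ann (fun ζ => (Ffun ξ ζ : ℝ)) η = ((η.degree : ℝ) - ξ.degree) * Ffun ξ η := by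
  by_cases hle : ξ ≤ η
  · rw [ann, sum_congr rfl fun x _ => mul_Ffun_tsub_single ξ η x, ← sum_mul, sum_sub_distrib,
      Finsupp.degree_apply, Finsupp.degree_apply,
      sum_subset (Finsupp.support_mono hle) fun x _ hx => by
        simp [Finsupp.notMem_support_iff.1 hx]]
    push_cast
    rfl
  · simp [ann, mul_Ffun_tsub_single, Ffun_eq_zero_of_not_le hle]

noncomputable def Dfun (ν : (V →₀ ℕ) → ℝ) (ξ η : V →₀ ℕ) : ℝ := Ffun ξ η / ν ξ

lemma ann_Dfun (ν : (V →₀ ℕ) → ℝ) (ξ η : V →₀ ℕ) :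
    ann (Dfun ν ξ) η = ((η.degree : ℝ) - ξ.degree) * Dfun ν ξ η := by
  have h := congrArg (· / ν ξ) (ann_Ffun ξ η)
  simp only [ann, sum_div, mul_div_assoc] at h
  exact h

open scoped Classical in
lemma Dfun_eq_ite_of_degree_le (ν : (V →₀ ℕ) → ℝ) {ξ η : V →₀ ℕ} (h : η.degree ≤ ξ.degree) :
    Dfun ν ξ η = if ξ = η then (ν ξ)⁻¹ else 0 := by
  rw [Dfun, Ffun_eq_ite_of_degree_le h]
  split_ifs <;> simp

lemma sum_smul_Dfun_apply [Finite V] {ν : (V →₀ ℕ) → ℝ} (hν : ∀ η, ν η ≠ 0)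
    (f : (V →₀ ℕ) → ℝ) {m : ℕ} {ζ : V →₀ ℕ} (hζ : ζ.degree = m) :
    (∑ ξ ∈ (Finsupp.finite_of_degree_eq m).toFinset, (f ξ * ν ξ) • Dfun ν ξ) ζ = f ζ := by
  classical
  have hT : ∀ ξ ∈ (Finsupp.finite_of_degree_eq (σ := V) m).toFinset,
      (f ξ * ν ξ) * Dfun ν ξ ζ = if ξ = ζ then f ξ else 0 := fun ξ hξ => by
    rw [Dfun_eq_ite_of_degree_le ν (by simp at hξ; omega)]
    split_ifs with he
    · field_simp [hν ξ]
    · rw [mul_zero]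
  simp only [Finset.sum_apply, Pi.smul_apply, smul_eq_mul]
  rw [sum_congr rfl hT, sum_ite_eq', if_pos (by simpa using hζ)]

noncomputable def annLinearMap : ((V →₀ ℕ) → ℝ) →ₗ[ℝ] (V →₀ ℕ) → ℝ where
  toFun := ann
  map_add' f g := funext fun η => by simp only [ann, Pi.add_apply, mul_add, sum_add_distrib]
  map_smul' a f := funext fun η => by
    simp only [ann, Pi.smul_apply, smul_eq_mul, RingHom.id_apply, mul_sum, mul_left_comm]

lemma annLinearMap_apply (f : (V →₀ ℕ) → ℝ) : annLinearMap f = ann f := rfl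

lemma ann_congr {f g : (V →₀ ℕ) → ℝ} {η : V →₀ ℕ}
    (h : ∀ ζ : V →₀ ℕ, ζ.degree + 1 = η.degree → f ζ = g ζ) : ann f η = ann g η :=
  sum_congr rfl fun x hx => by rw [h _ (Finsupp.degree_tsub_single_add_one hx)]

lemma ann_zero_apply (η : V →₀ ℕ) : ann 0 η = 0 := by
  simp [ann]

section Generator

variable (c : (V →₀ ℕ) → (V →₀ ℕ) → ℝ)

lemma gen_congr (hconsv : ∀ η η', c η η' ≠ 0 → η.degree = η'.degree) {f g : (V →₀ ℕ) → ℝ}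
    {η : V →₀ ℕ} (h : ∀ ζ : V →₀ ℕ, ζ.degree = η.degree → f ζ = g ζ) :
    gen c f η = gen c g η :=
  finsum_congr fun η' => by
    by_cases hc : c η η' = 0
    · simp [hc]
    · rw [h η' (hconsv η η' hc).symm, h η rfl]

lemma gen_mul_degree (hconsv : ∀ η η', c η η' ≠ 0 → η.degree = η'.degree) (φ : ℕ → ℝ)
    (f : (V →₀ ℕ) → ℝ) (η : V →₀ ℕ) :
    gen c (fun ζ => φ ζ.degree * f ζ) η = φ η.degree * gen c f η := by
  rw [gen, gen, mul_finsum]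
  refine finsum_congr fun η' => ?_
  by_cases hc : c η η' = 0
  · simp [hc]
  · rw [← hconsv η η' hc]
    ring

open scoped Classical in
lemma gen_ite_of_ne {a b : V →₀ ℕ} (hab : a ≠ b) (r : ℝ) :
    gen c (fun ζ => if ζ = a then r else 0) b = c b a * r := by
  rw [gen, finsum_eq_single _ a fun ζ hζ => by simp [hζ, hab.symm]]
  simp [hab.symm]

lemma gen_eq_sum (hfin : ∀ η, {η' | c η η' ≠ 0}.Finite) (f : (V →₀ ℕ) → ℝ) (η : V →₀ ℕ) :
    gen c f η = ∑ η' ∈ (hfin η).toFinset, c η η' * (f η' - f η) :=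
  finsum_eq_sum_of_support_subset _ fun η' h => by simpa using left_ne_zero_of_mul h

noncomputable def genLinearMap (hfin : ∀ η, {η' | c η η' ≠ 0}.Finite) :
    ((V →₀ ℕ) → ℝ) →ₗ[ℝ] (V →₀ ℕ) → ℝ where
  toFun := gen c
  map_add' f g := funext fun η => by
    simp only [gen_eq_sum c hfin, Pi.add_apply, ← sum_add_distrib]
    exact sum_congr rfl fun _ _ => by ring
  map_smul' a f := funext fun η => by
    simp only [gen_eq_sum c hfin, Pi.smul_apply, smul_eq_mul, RingHom.id_apply, mul_sum]
    exact sum_congr rfl fun _ _ => by ring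

lemma ann_gen_swap (hfin : ∀ η, {η' | c η η' ≠ 0}.Finite) (K : (V →₀ ℕ) → (V →₀ ℕ) → ℝ)
    (ξ η : V →₀ ℕ) :
    ann (fun θ => gen c (fun ζ => K ζ θ) ξ) η = gen c (fun ζ => ann (K ζ) η) ξ := by
  simp only [ann, gen_eq_sum c hfin, mul_sum, mul_sub, sum_sub_distrib]
  rw [Finset.sum_comm (s := η.support), Finset.sum_comm (s := η.support)]
  simp only [mul_left_comm]

noncomputable def dualityDefect (K : (V →₀ ℕ) → (V →₀ ℕ) → ℝ) (ξ η : V →₀ ℕ) : ℝ :=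
  gen c (K ξ) η - gen c (fun ζ => K ζ η) ξ

end Generator

section Duality

variable {c : (V →₀ ℕ) → (V →₀ ℕ) → ℝ}

lemma gen_ann_sub_ann_gen (hfin : ∀ η, {η' | c η η' ≠ 0}.Finite)
    (hconsv : ∀ η η', c η η' ≠ 0 → η.degree = η'.degree) {K : (V →₀ ℕ) → (V →₀ ℕ) → ℝ}
    (hK : ∀ ξ η, ann (K ξ) η = ((η.degree : ℝ) - ξ.degree) * K ξ η) (ξ η : V →₀ ℕ) :
    gen c (ann (K ξ)) η - ann (gen c (K ξ)) η
      = ((η.degree : ℝ) - ξ.degree) * dualityDefect c K ξ η - ann (dualityDefect c K ξ) η := by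
  have hleft : gen c (ann (K ξ)) η = ((η.degree : ℝ) - ξ.degree) * gen c (K ξ) η := by
    simp only [funext (hK ξ)]
    exact gen_mul_degree c hconsv (fun n => (n : ℝ) - ξ.degree) (K ξ) η
  have hswap : ann (fun θ => gen c (fun ζ => K ζ θ) ξ) η
      = ((η.degree : ℝ) - ξ.degree) * gen c (fun ζ => K ζ η) ξ := by
    simp only [ann_gen_swap c hfin, hK]
    exact gen_mul_degree c hconsv (fun n => (η.degree : ℝ) - n) (fun ζ => K ζ η) ξ
  have hsplit : gen c (K ξ) = dualityDefect c K ξ + fun θ => gen c (fun ζ => K ζ θ) ξ := by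
    funext η
    simp [dualityDefect]
  rw [hleft, hsplit, ← annLinearMap_apply, map_add]
  simp only [Pi.add_apply, annLinearMap_apply, hswap]
  ring

lemma dualityDefect_eq_zero_of_commute (hfin : ∀ η, {η' | c η η' ≠ 0}.Finite)
    (hconsv : ∀ η η', c η η' ≠ 0 → η.degree = η'.degree) {K : (V →₀ ℕ) → (V →₀ ℕ) → ℝ}
    (hK : ∀ ξ η, ann (K ξ) η = ((η.degree : ℝ) - ξ.degree) * K ξ η)
    (hbase : ∀ ξ η, η.degree ≤ ξ.degree → dualityDefect c K ξ η = 0)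
    (hcomm : ∀ f, gen c (ann f) = ann (gen c f)) (ξ η : V →₀ ℕ) :
    dualityDefect c K ξ η = 0 := by
  induction hn : η.degree generalizing η with
  | zero => exact hbase ξ η (by omega)
  | succ n ih =>
    by_cases hle : η.degree ≤ ξ.degree
    · exact hbase ξ η hle
    have key := gen_ann_sub_ann_gen hfin hconsv hK ξ η
    rw [hcomm, sub_self, ann_congr (g := 0) fun ζ hζ => ih ζ (by omega), ann_zero_apply,
      sub_zero, eq_comm, mul_eq_zero] at key
    refine key.resolve_left (sub_ne_zero.2 ?_)
    exact_mod_cast (Nat.lt_of_not_le hle).ne'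

lemma dualityDefect_Dfun_eq_zero_of_degree_le
    (hconsv : ∀ η η', c η η' ≠ 0 → η.degree = η'.degree) {ν : (V →₀ ℕ) → ℝ}
    (hν : ∀ η, ν η ≠ 0) (hrev : ∀ η η', ν η * c η η' = ν η' * c η' η) {ξ η : V →₀ ℕ}
    (h : η.degree ≤ ξ.degree) :
    dualityDefect c (Dfun ν) ξ η = 0 := by
  classical
  have hη : gen c (Dfun ν ξ) η = gen c (fun ζ => if ζ = ξ then (ν ξ)⁻¹ else 0) η :=
    gen_congr c hconsv fun ζ hζ => by
      rw [Dfun_eq_ite_of_degree_le ν (hζ ▸ h)]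
      simp only [eq_comm]
  have hξ : gen c (fun ζ => Dfun ν ζ η) ξ = gen c (fun ζ => if ζ = η then (ν η)⁻¹ else 0) ξ :=
    gen_congr c hconsv fun ζ hζ => by
      rw [Dfun_eq_ite_of_degree_le ν (hζ ▸ h)]
      split_ifs with he <;> simp [he]
  rw [dualityDefect, hη, hξ]
  rcases eq_or_ne ξ η with rfl | hne
  · exact sub_self _
  · rw [gen_ite_of_ne c hne, gen_ite_of_ne c hne.symm, sub_eq_zero]
    field_simp [hν ξ, hν η]
    linarith [hrev ξ η]

lemma commute_of_commute_Dfun [Finite V] (hfin : ∀ η, {η' | c η η' ≠ 0}.Finite)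
    (hconsv : ∀ η η', c η η' ≠ 0 → η.degree = η'.degree) {ν : (V →₀ ℕ) → ℝ}
    (hν : ∀ η, ν η ≠ 0) (hD : ∀ ξ, gen c (ann (Dfun ν ξ)) = ann (gen c (Dfun ν ξ)))
    (f : (V →₀ ℕ) → ℝ) : gen c (ann f) = ann (gen c f) := by
  funext η
  set g := ∑ ξ ∈ (Finsupp.finite_of_degree_eq (η.degree - 1)).toFinset, (f ξ * ν ξ) • Dfun ν ξ
  have hfg : ∀ ζ : V →₀ ℕ, ζ.degree + 1 = η.degree → f ζ = g ζ := fun ζ hζ =>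
    (sum_smul_Dfun_apply hν f (by omega)).symm
  have hg : gen c (ann g) = ann (gen c g) :=
    LinearMap.eqOn_span (f := genLinearMap c hfin ∘ₗ annLinearMap)
      (g := annLinearMap ∘ₗ genLinearMap c hfin) (s := Set.range (Dfun ν))
      (by rintro _ ⟨ξ, rfl⟩; exact hD ξ)
      (Submodule.sum_mem _ fun ξ _ => Submodule.smul_mem _ _ (Submodule.subset_span ⟨ξ, rfl⟩))
  calc gen c (ann f) η = gen c (ann g) η :=
        gen_congr c hconsv fun ζ hζ => ann_congr fun ζ' hζ' => hfg ζ' (by omega)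
    _ = ann (gen c g) η := congrFun hg η
    _ = ann (gen c f) η :=
        ann_congr fun ζ hζ => (gen_congr c hconsv fun ζ' hζ' => hfg ζ' (by omega)).symm

end Duality

end Configurations

theorem stmt0_general {V : Type*} [Fintype V]
    (c : (V →₀ ℕ) → (V →₀ ℕ) → ℝ)
    (hfin : ∀ η, {η' | c η η' ≠ 0}.Finite)
    (hconsv : ∀ η η', c η η' ≠ 0 → (∑ x, η x) = ∑ x, η' x)
    (ν : (V →₀ ℕ) → ℝ) (hν : ∀ η, 0 < ν η)
    (hrev : ∀ η η', ν η * c η η' = ν η' * c η' η) :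
    (∀ f, gen c (ann f) = ann (gen c f)) ↔
      (∀ ξ η : V →₀ ℕ,
        ∑ᶠ ξ', c ξ ξ' * ((Ffun ξ' η : ℝ) / ν ξ' - (Ffun ξ η : ℝ) / ν ξ)
          = ∑ᶠ η', c η η' * ((Ffun ξ η' : ℝ) / ν ξ - (Ffun ξ η : ℝ) / ν ξ)) := by
  have hconsv' : ∀ η η', c η η' ≠ 0 → η.degree = η'.degree := by
    simpa only [Finsupp.degree_eq_sum] using hconsv
  have hν' : ∀ η, ν η ≠ 0 := fun η => (hν η).ne'
  change _ ↔ ∀ ξ η, gen c (fun ζ => Dfun ν ζ η) ξ = gen c (Dfun ν ξ) η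
  refine ⟨fun hcomm ξ η => ?_, fun hdual => ?_⟩
  · refine (sub_eq_zero.1 ?_).symm
    exact dualityDefect_eq_zero_of_commute hfin hconsv' (ann_Dfun ν)
      (fun _ _ => dualityDefect_Dfun_eq_zero_of_degree_le hconsv' hν' hrev) hcomm ξ η
  · refine commute_of_commute_Dfun hfin hconsv' hν' fun ξ => funext fun η => sub_eq_zero.1 ?_
    have hzero : dualityDefect c (Dfun ν) ξ = 0 :=
      funext fun η => sub_eq_zero.2 (hdual ξ η).symm
    rw [gen_ann_sub_ann_gen hfin hconsv' (ann_Dfun ν), hzero, ann_zero_apply, Pi.zero_apply]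
    ring

/-- **Consistency ⇔ self-duality for reversible systems** (Theorem 4.1):
for a particle-number conserving configuration process with strictly positive
reversible measure `ν`, the generator commutes with the annihilation operator
iff `D(ξ,η) = F(ξ,η)/ν(ξ)` is a self-duality function. -/
theorem stmt0 {V : Type*} [Fintype V] [Nonempty V]
    (c : (V →₀ ℕ) → (V →₀ ℕ) → ℝ)
    (hpos : ∀ η η', 0 ≤ c η η')
    (hdiag : ∀ η, c η η = 0)
    (hfin : ∀ η, {η' | c η η' ≠ 0}.Finite)
    (hconsv : ∀ η η', c η η' ≠ 0 → (∑ x, η x) = ∑ x, η' x)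
    (ν : (V →₀ ℕ) → ℝ) (hν : ∀ η, 0 < ν η)
    (hrev : ∀ η η', ν η * c η η' = ν η' * c η' η) :
    (∀ f, gen c (ann f) = ann (gen c f)) ↔
      (∀ ξ η : V →₀ ℕ,
        ∑ᶠ ξ', c ξ ξ' * ((Ffun ξ' η : ℝ) / ν ξ' - (Ffun ξ η : ℝ) / ν ξ)
          = ∑ᶠ η', c η η' * ((Ffun ξ η' : ℝ) / ν ξ - (Ffun ξ η : ℝ) / ν ξ)) :=
  stmt0_general c hfin hconsv ν hν hrev
end

section
/- Let c, c̄ : ℕ × ℕ → ℝ be rate functions with c(0,m) = 0 and c̄(0,κ) = 0 for all m, κ. Define the single-edge generator L acting on f : ℕ × ℕ → ℝ by (Lf)(κ,m) := c(κ,m)·(f(κ−1, m+1) − f(κ,m)) + c̄(m,κ)·(f(κ+1, m−1) − f(κ,m)) (the terms with backward subtraction carry zero coefficient when κ = 0 resp. m = 0), and the single-site annihilation operators a₁ f(κ,m) := κ·f(κ−1,m), a₂ f(κ,m) := m·f(κ,m−1). Then L commutes with a₁ + a₂ (i.e. L((a₁+a₂)f) = (a₁+a₂)(Lf) for every f : ℕ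 × ℕ → ℝ) if and only if there exist constants θ, α, ᾱ ∈ ℝ such that c(κ,m) = κ·(θ·m + α) and c̄(m,κ) = m·(θ·κ + ᾱ) for all κ, m ∈ ℕ. -/
/-- Single-edge generator: one particle jumps from the site with `κ` particles to the
site with `m` particles at rate `c κ m`, and in the reverse direction at rate `cb m κ`. -/
noncomputable def edgeGen (c cb : ℕ → ℕ → ℝ) (f : ℕ → ℕ → ℝ) : ℕ → ℕ → ℝ :=
  fun κ m =>
    c κ m * (f (κ - 1) (m + 1) - f κ m) + cb m κ * (f (κ + 1) (m - 1) - f κ m)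

/-- Single-site annihilation operator acting on the first variable. -/
noncomputable def a1 (f : ℕ → ℕ → ℝ) : ℕ → ℕ → ℝ := fun κ m => (κ : ℝ) * f (κ - 1) m

/-- Single-site annihilation operator acting on the second variable. -/
noncomputable def a2 (f : ℕ → ℕ → ℝ) : ℕ → ℕ → ℝ := fun κ m => (m : ℝ) * f κ (m - 1)

def δδ (p q : ℕ) : ℕ → ℕ → ℝ := fun x y => if x = p ∧ y = q then 1 else 0

/-- **Characterization of consistent rates** (Theorem 3.2): the single-edge generator
commutes with `a₁ + a₂` iff the rates are of the linear form
`c(κ,m) = κ(θm + α)`, `c̄(m,κ) = m(θκ + ᾱ)`. -/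
theorem stmt1 (c cb : ℕ → ℕ → ℝ)
    (hc0 : ∀ m, c 0 m = 0) (hcb0 : ∀ κ, cb 0 κ = 0) :
    (∀ f : ℕ → ℕ → ℝ,
        edgeGen c cb (fun κ m => a1 f κ m + a2 f κ m)
          = fun κ m => a1 (edgeGen c cb f) κ m + a2 (edgeGen c cb f) κ m) ↔
      ∃ θ α ᾱ : ℝ,
        (∀ κ m : ℕ, c κ m = (κ : ℝ) * (θ * (m : ℝ) + α)) ∧
        (∀ κ m : ℕ, cb m κ = (m : ℝ) * (θ * (κ : ℝ) + ᾱ)) := by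
  constructor
  · intro H
    -- F1
    have F1 : ∀ k m : ℕ, ((k:ℝ)+1) * c (k+2) m = ((k:ℝ)+2) * c (k+1) m := by
      intro k m
      have E := congrFun (congrFun (H (δδ k (m+1))) (k+2)) m
      simp only [edgeGen, a1, a2, δδ] at E
      norm_num at E
      split_ifs at E <;> first | omega | linarith
    -- F2
    have F2 : ∀ k m : ℕ, ((m:ℝ)+1) * cb (m+2) k = ((m:ℝ)+2) * cb (m+1) k := by
      intro k m
      have E := congrFun (congrFun (H (δδ (k+1) m)) k) (m+2)
      simp only [edgeGen, a1, a2, δδ] at E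
      norm_num at E
      split_ifs at E <;> first | omega | linarith
    -- F3 : (m+1)(c 1 (m+1) - c 1 m) = cb (m+1) 1 - cb (m+1) 0
    have F3 : ∀ m : ℕ, ((m:ℝ)+1) * (c 1 (m+1) - c 1 m) = cb (m+1) 1 - cb (m+1) 0 := by
      intro m
      have E := congrFun (congrFun (H (δδ 0 (m+1))) 1) (m+1)
      simp only [edgeGen, a1, a2, δδ] at E
      norm_num [hc0, hcb0] at E
      linarith
    -- F4 : (k+1)(cb 1 (k+1) - cb 1 k) = c (k+1) 1 - c (k+1) 0
    have F4 : ∀ k : ℕ, ((k:ℝ)+1) * (cb 1 (k+1) - cb 1 k) = c (k+1) 1 - c (k+1) 0 := by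
      intro k
      have E := congrFun (congrFun (H (δδ (k+1) 0)) (k+1)) 1
      simp only [edgeGen, a1, a2, δδ] at E
      norm_num [hc0, hcb0] at E
      linarith
    -- c (k+1) m = (k+1) * c 1 m
    have hc1 : ∀ k m : ℕ, c (k+1) m = ((k:ℝ)+1) * c 1 m := by
      intro k m
      induction k with
      | zero => simp
      | succ n ih =>
        have := F1 n m
        have hne : ((n:ℝ)+1) ≠ 0 := by positivity
        have : ((n:ℝ)+1) * c (n+2) m = ((n:ℝ)+1) * (((n:ℝ)+2) * c 1 m) := by
          rw [F1 n m, ih]; ring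
        have := mul_left_cancel₀ hne this
        push_cast
        push_cast at this
        linarith
    have hcb1 : ∀ m k : ℕ, cb (m+1) k = ((m:ℝ)+1) * cb 1 k := by
      intro m k
      induction m with
      | zero => simp
      | succ n ih =>
        have hne : ((n:ℝ)+1) ≠ 0 := by positivity
        have : ((n:ℝ)+1) * cb (n+2) k = ((n:ℝ)+1) * (((n:ℝ)+2) * cb 1 k) := by
          rw [F2 k n, ih]; ring
        have := mul_left_cancel₀ hne this
        push_cast
        push_cast at this
        linarith
    set θ := c 1 1 - c 1 0 with hθ
    refine ⟨θ, c 1 0, cb 1 0, ?_, ?_⟩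
    · -- need c 1 m = θ m + c 1 0 first; uses F3 with hcb1 and cb 1 1 - cb 1 0 = θ
      have hv0 : cb 1 1 - cb 1 0 = θ := by
        have := F4 0
        have h1 : c 1 1 - c 1 0 = θ := rfl
        push_cast at this; linarith
      have hu : ∀ m : ℕ, c 1 m = θ * m + c 1 0 := by
        intro m
        induction m with
        | zero => norm_num
        | succ n ih =>
          have h3 := F3 n
          rw [hcb1 n 1, hcb1 n 0] at h3
          have hne : ((n:ℝ)+1) ≠ 0 := by positivity
          have : c 1 (n+1) - c 1 n = cb 1 1 - cb 1 0 := by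
            have := mul_left_cancel₀ hne (by linear_combination h3 : ((n:ℝ)+1) * (c 1 (n+1) - c 1 n) = ((n:ℝ)+1) * (cb 1 1 - cb 1 0))
            exact this
          push_cast
          rw [hv0] at this
          linarith [ih]
      intro κ m
      cases κ with
      | zero => simp [hc0]
      | succ k =>
        rw [hc1 k m, hu m]; push_cast; ring
    · have hv : ∀ k : ℕ, cb 1 k = θ * k + cb 1 0 := by
        intro k
        induction k with
        | zero => norm_num
        | succ n ih =>
          have h4 := F4 n
          rw [hc1 n 1, hc1 n 0] at h4
          have hne : ((n:ℝ)+1) ≠ 0 := by positivity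
          have : cb 1 (n+1) - cb 1 n = c 1 1 - c 1 0 := by
            have := mul_left_cancel₀ hne (by linear_combination h4 : ((n:ℝ)+1) * (cb 1 (n+1) - cb 1 n) = ((n:ℝ)+1) * (c 1 1 - c 1 0))
            exact this
          push_cast
          rw [← hθ] at this
          linarith [ih]
      intro κ m
      cases m with
      | zero => simp [hcb0]
      | succ n =>
        rw [hcb1 n κ, hv κ]; push_cast; ring
  · rintro ⟨θ, α, ᾱ, hc, hcb⟩ f
    funext κ m
    simp only [edgeGen, a1, a2, hc, hcb]
    cases κ with
    | zero =>
      cases m with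
      | zero => push_cast; ring
      | succ n => push_cast [Nat.add_sub_cancel]; ring
    | succ k =>
      cases m with
      | zero => push_cast [Nat.add_sub_cancel]; ring
      | succ n => push_cast [Nat.add_sub_cancel]; ring
end

section
/- Let V be a finite nonempty type and for each n ≥ 1 let L_n be a linear operator on functions V^n → ℝ such that (i) L_n commutes with every permutation operator T_σ, where (T_σ g)(x_1,…,x_n) := g(x_{σ(1)},…,x_{σ(n)}) for σ a permutation of {1,…,n}, and (ii) for every n ≥ 2 and every permutation-invariant g : V^{n−1} → ℝ, L_n(Π^{(n)}g) = Π^{(n)}(L_{n−1}g), where (Π^{(n)}g)(x_1,…,x_n) := Σ_{i=1}^n g(x_1,…,x_{i−1},x_{i+1},…,x_n). For each n let μ_n : V^n → ℝ be nonnegative weights summing to 1 that are permutation-invariant (μ_n(x∘σ) = μ_n(x)) and consistent: Σ_{y ∈ V} μ_n(x_1,…,x_{n−1},y) = μ_{n−1}(x_1,…,x_{n−1}). Then for every n ≥ 2, every t ≥ 0 and every permutation-invariant g : V^{n−1} → ℝ: Σ_{x ∈ V^n} μ_n(x) · (exp(t·L_n)(π_n g))(x) = Σ_{x ∈ V^{n−1}}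 μ_{n−1}(x) · (exp(t·L_{n−1})g)(x), where (π_n g)(x_1,…,x_n) := g(x_1,…,x_{n−1}) and exp denotes the operator exponential on the finite-dimensional space of functions. -/
/-- Operator exponential `exp(t L)` on the finite-dimensional space of functions. -/
noncomputable def expOp {Ω : Type*} [Fintype Ω] (t : ℝ) (L : (Ω → ℝ) →ₗ[ℝ] (Ω → ℝ)) :
    (Ω → ℝ) →L[ℝ] (Ω → ℝ) :=
  NormedSpace.exp (t • (LinearMap.toContinuousLinearMap L))

/-!
Write `Π` for `removalOp`. On permutation-invariant functions `L (n+2) ∘ Π = Π ∘ L (n+1)`, and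
`L (n+1)` preserves permutation invariance, so the intertwining passes to all powers and hence to
the exponentials: `exp(t L (n+2)) (Π g) = Π (exp(t L (n+1)) g)`. Pairing against a
permutation-invariant `μ (n+2)`, the `n+2` summands of `Π h` all contribute the same as
`h ∘ Fin.init`, even after applying an operator commuting with permutations such as
`exp(t L (n+2))`; consistency then replaces `h ∘ Fin.init` paired with `μ (n+2)` by `h` paired
with `μ (n+1)`. Pairing the intertwining identity with `μ (n+2)` thus yields `n+2` times the claim.
-/

theorem NormedSpace.exp_apply_eq_of_intertwine {𝕂 E F : Type*} [RCLike 𝕂]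
    [NormedAddCommGroup E] [NormedSpace 𝕂 E] [CompleteSpace E]
    [NormedAddCommGroup F] [NormedSpace 𝕂 F] [CompleteSpace F]
    {A : E →L[𝕂] E} {B : F →L[𝕂] F} (P : E →L[𝕂] F) (S : Set E)
    (hA : ∀ x ∈ S, A x ∈ S) (hBP : ∀ x ∈ S, B (P x) = P (A x)) {x : E} (hx : x ∈ S) :
    NormedSpace.exp B (P x) = P (NormedSpace.exp A x) := by
  have hmem : ∀ k : ℕ, (A ^ k) x ∈ S := by
    intro k
    induction k with
    | zero => exact hx
    | succ k ih => rw [pow_succ']; exact hA _ ih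
  have hpow : ∀ k : ℕ, (B ^ k) (P x) = P ((A ^ k) x) := by
    intro k
    induction k with
    | zero => rfl
    | succ k ih =>
      rw [pow_succ', pow_succ']
      exact (congrArg B ih).trans (hBP _ (hmem k))
  have hB := (NormedSpace.exp_series_hasSum_exp' (𝕂 := 𝕂) B).mapL
    (ContinuousLinearMap.apply 𝕂 F (P x))
  have hA := ((NormedSpace.exp_series_hasSum_exp' (𝕂 := 𝕂) A).mapL
    (ContinuousLinearMap.apply 𝕂 E x)).mapL P
  refine hB.unique ?_
  simpa [hpow] using hA

section expOp

variable {Ω Ω' : Type*} [Fintype Ω] [Fintype Ω']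

theorem expOp_apply_of_intertwine (t : ℝ) {L : (Ω → ℝ) →ₗ[ℝ] (Ω → ℝ)}
    {L' : (Ω' → ℝ) →ₗ[ℝ] (Ω' → ℝ)} (P : (Ω → ℝ) →ₗ[ℝ] (Ω' → ℝ)) (S : Submodule ℝ (Ω → ℝ))
    (hL : ∀ g ∈ S, L g ∈ S) (hLP : ∀ g ∈ S, L' (P g) = P (L g)) {g : Ω → ℝ} (hg : g ∈ S) :
    expOp t L' (P g) = P (expOp t L g) :=
  NormedSpace.exp_apply_eq_of_intertwine (LinearMap.toContinuousLinearMap P) S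
    (fun g hg => S.smul_mem t (hL g hg)) (fun g hg => by simp [hLP g hg]) hg

theorem expOp_comp (t : ℝ) {L : (Ω → ℝ) →ₗ[ℝ] (Ω → ℝ)} {L' : (Ω' → ℝ) →ₗ[ℝ] (Ω' → ℝ)}
    (f : Ω' → Ω) (hL : ∀ g : Ω → ℝ, L' (g ∘ f) = L g ∘ f) (g : Ω → ℝ) :
    expOp t L' (g ∘ f) = expOp t L g ∘ f :=
  expOp_apply_of_intertwine t (LinearMap.funLeft ℝ ℝ f) ⊤ (by simp)
    (fun g _ => hL g) Submodule.mem_top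

end expOp

section Tuples

variable {V : Type*}

variable (V) in
def symmetricFunctions (m : ℕ) : Submodule ℝ ((Fin m → V) → ℝ) where
  carrier := {g | ∀ σ : Equiv.Perm (Fin m), ∀ x, g (x ∘ σ) = g x}
  add_mem' hf hg σ x := by simp [hf σ x, hg σ x]
  zero_mem' _ _ := rfl
  smul_mem' c g hg σ x := by simp [hg σ x]

theorem map_mem_symmetricFunctions {m : ℕ} {M : ((Fin m → V) → ℝ) →ₗ[ℝ] ((Fin m → V) → ℝ)}
    (hM : ∀ σ : Equiv.Perm (Fin m), ∀ g : (Fin m → V) → ℝ,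
      M (fun x => g (x ∘ σ)) = fun x => M g (x ∘ σ))
    {g : (Fin m → V) → ℝ} (hg : g ∈ symmetricFunctions V m) :
    M g ∈ symmetricFunctions V m := by
  intro σ x
  have hgσ : (fun y => g (y ∘ σ)) = g := funext (hg σ)
  rw [← congrFun (hM σ g) x, hgσ]

variable (V) in
def removalOp (n : ℕ) : ((Fin n → V) → ℝ) →ₗ[ℝ] ((Fin (n + 1) → V) → ℝ) :=
  ∑ i : Fin (n + 1), LinearMap.funLeft ℝ ℝ (fun x : Fin (n + 1) → V => x ∘ i.succAbove)

theorem removalOp_apply {n : ℕ} (g : (Fin n → V) → ℝ) :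
    removalOp V n g = fun x => ∑ i : Fin (n + 1), g (x ∘ i.succAbove) := by
  ext x
  simp [removalOp]

variable [Fintype V]

theorem sum_comp_perm {m : ℕ} (σ : Equiv.Perm (Fin m)) (F : (Fin m → V) → ℝ) :
    ∑ x : Fin m → V, F (x ∘ σ) = ∑ x, F x :=
  Equiv.sum_comp (σ.symm.arrowCongr (Equiv.refl V)) F

theorem sum_mul_comp_perm {m : ℕ} {μ : (Fin m → V) → ℝ}
    (hμ : ∀ σ : Equiv.Perm (Fin m), ∀ x, μ (x ∘ σ) = μ x) (σ : Equiv.Perm (Fin m))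
    (F : (Fin m → V) → ℝ) :
    ∑ x, μ x * F (x ∘ σ) = ∑ x, μ x * F x := by
  simpa only [hμ] using sum_comp_perm σ (fun x => μ x * F x)

theorem exists_perm_apply_castSucc {n : ℕ} (i : Fin (n + 1)) :
    ∃ τ : Equiv.Perm (Fin (n + 1)), ∀ j, τ j.castSucc = i.succAbove j :=
  ⟨(finSuccEquiv' (Fin.last n)).trans (finSuccEquiv' i).symm, fun j => by
    simp [← Fin.succAbove_last]⟩

theorem sum_mul_apply_comp_succAbove {n : ℕ} {μ : (Fin (n + 1) → V) → ℝ}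
    (hμ : ∀ σ : Equiv.Perm (Fin (n + 1)), ∀ x, μ (x ∘ σ) = μ x)
    {M : ((Fin (n + 1) → V) → ℝ) →ₗ[ℝ] ((Fin (n + 1) → V) → ℝ)}
    (hM : ∀ σ : Equiv.Perm (Fin (n + 1)), ∀ g : (Fin (n + 1) → V) → ℝ,
      M (fun x => g (x ∘ σ)) = fun x => M g (x ∘ σ))
    (i : Fin (n + 1)) (h : (Fin n → V) → ℝ) :
    ∑ x, μ x * M (fun y => h (y ∘ i.succAbove)) x = ∑ x, μ x * M (fun y => h (Fin.init y)) x := by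
  obtain ⟨τ, hτ⟩ := exists_perm_apply_castSucc i
  have hh : (fun y => h (y ∘ i.succAbove)) = fun y => (fun z => h (Fin.init z)) (y ∘ τ) :=
    funext fun y => congrArg h (funext fun j => congrArg y (hτ j).symm)
  rw [hh, hM τ fun z => h (Fin.init z)]
  exact sum_mul_comp_perm hμ τ _

theorem sum_mul_apply_removalOp {n : ℕ} {μ : (Fin (n + 1) → V) → ℝ}
    (hμ : ∀ σ : Equiv.Perm (Fin (n + 1)), ∀ x, μ (x ∘ σ) = μ x)
    (M : ((Fin (n + 1) → V) → ℝ) →ₗ[ℝ] ((Fin (n + 1) → V) → ℝ))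
    (hM : ∀ σ : Equiv.Perm (Fin (n + 1)), ∀ g : (Fin (n + 1) → V) → ℝ,
      M (fun x => g (x ∘ σ)) = fun x => M g (x ∘ σ))
    (h : (Fin n → V) → ℝ) :
    ∑ x, μ x * M (removalOp V n h) x = (n + 1) * ∑ x, μ x * M (fun y => h (Fin.init y)) x := by
  have hP : removalOp V n h = ∑ i : Fin (n + 1), fun y => h (y ∘ i.succAbove) :=
    (removalOp_apply h).trans (Finset.sum_fn _ _).symm
  simp only [hP, map_sum, Finset.sum_apply, Finset.mul_sum]
  rw [Finset.sum_comm, Finset.sum_congr rfl fun i _ => sum_mul_apply_comp_succAbove hμ hM i h]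
  simp [Finset.mul_sum]

theorem sum_mul_init {n : ℕ} {μ : (Fin n → V) → ℝ} {μ' : (Fin (n + 1) → V) → ℝ}
    (hcons : ∀ x, ∑ y, μ' (Fin.snoc x y) = μ x) (h : (Fin n → V) → ℝ) :
    ∑ x, μ' x * h (Fin.init x) = ∑ x, μ x * h x := by
  rw [← (Fin.snocEquiv fun _ => V).sum_comp, Fintype.sum_prod_type, Finset.sum_comm]
  simp [Fin.snocEquiv, ← Finset.sum_mul, hcons]

end Tuples

theorem stmt3_general {V : Type*} [Fintype V]
    (L : ∀ n : ℕ, ((Fin n → V) → ℝ) →ₗ[ℝ] ((Fin n → V) → ℝ))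
    (hperm : ∀ n : ℕ, 1 ≤ n → ∀ σ : Equiv.Perm (Fin n), ∀ g : (Fin n → V) → ℝ,
        L n (fun x => g (x ∘ σ)) = fun x => L n g (x ∘ σ))
    (hint : ∀ n : ℕ, ∀ g : (Fin (n + 1) → V) → ℝ,
        (∀ σ : Equiv.Perm (Fin (n + 1)), ∀ x, g (x ∘ σ) = g x) →
        L (n + 2) (fun x => ∑ i : Fin (n + 2), g (x ∘ i.succAbove))
          = fun x => ∑ i : Fin (n + 2), L (n + 1) g (x ∘ i.succAbove))
    (μ : ∀ n : ℕ, (Fin n → V) → ℝ)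
    (hμperm : ∀ n : ℕ, ∀ σ : Equiv.Perm (Fin n), ∀ x : Fin n → V, μ n (x ∘ σ) = μ n x)
    (hμcons : ∀ n : ℕ, ∀ x : Fin n → V, ∑ y : V, μ (n + 1) (Fin.snoc x y) = μ n x)
    (t : ℝ)
    (n : ℕ) (g : (Fin (n + 1) → V) → ℝ)
    (hg : ∀ σ : Equiv.Perm (Fin (n + 1)), ∀ x, g (x ∘ σ) = g x) :
    ∑ x : Fin (n + 2) → V,
        μ (n + 2) x * expOp t (L (n + 2)) (fun y => g (Fin.init y)) x
      = ∑ x : Fin (n + 1) → V, μ (n + 1) x * expOp t (L (n + 1)) g x := by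
  set E := expOp t (L (n + 1)) g
  have hexp_perm : ∀ σ : Equiv.Perm (Fin (n + 2)), ∀ F : (Fin (n + 2) → V) → ℝ,
      expOp t (L (n + 2)) (fun x => F (x ∘ σ)) = fun x => expOp t (L (n + 2)) F (x ∘ σ) :=
    fun σ => expOp_comp t (· ∘ σ) (hperm (n + 2) (by omega) σ)
  have hexp_removal : expOp t (L (n + 2)) (removalOp V (n + 1) g) = removalOp V (n + 1) E :=
    expOp_apply_of_intertwine t _ (symmetricFunctions V (n + 1))
      (fun _ => map_mem_symmetricFunctions (hperm (n + 1) (by omega)))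
      (fun h hh => by rw [removalOp_apply, removalOp_apply, hint n h hh]) hg
  have key :
      ((n + 1 : ℕ) + 1 : ℝ) * ∑ x, μ (n + 2) x * expOp t (L (n + 2)) (fun y => g (Fin.init y)) x
        = ((n + 1 : ℕ) + 1 : ℝ) * ∑ x, μ (n + 1) x * E x := by
    calc _ = ∑ x, μ (n + 2) x * expOp t (L (n + 2)) (removalOp V (n + 1) g) x :=
          (sum_mul_apply_removalOp (hμperm _) (expOp t (L (n + 2))).toLinearMap hexp_perm g).symm
      _ = ∑ x, μ (n + 2) x * removalOp V (n + 1) E x := by rw [hexp_removal]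
      _ = ((n + 1 : ℕ) + 1 : ℝ) * ∑ x, μ (n + 2) x * E (Fin.init x) :=
          sum_mul_apply_removalOp (hμperm _) LinearMap.id (fun _ _ => rfl) E
      _ = _ := by rw [sum_mul_init (hμcons (n + 1))]
  exact mul_left_cancel₀ (by positivity) key

/-- **Consistency of coordinate processes** (Theorem 3.1): if the `n`-particle generators
commute with permutations and are intertwined via the removal operators `Π⁽ⁿ⁾`, and the
initial distributions `μ n` form a consistent permutation-invariant family, then
marginalizing the first `n-1` coordinates of the `n`-particle evolution started from `μ n`
gives the `(n-1)`-particle evolution started from `μ (n-1)`. -/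
theorem stmt3 {V : Type*} [Fintype V] [Nonempty V]
    (L : ∀ n : ℕ, ((Fin n → V) → ℝ) →ₗ[ℝ] ((Fin n → V) → ℝ))
    (hperm : ∀ n : ℕ, 1 ≤ n → ∀ σ : Equiv.Perm (Fin n), ∀ g : (Fin n → V) → ℝ,
        L n (fun x => g (x ∘ σ)) = fun x => L n g (x ∘ σ))
    (hint : ∀ n : ℕ, ∀ g : (Fin (n + 1) → V) → ℝ,
        (∀ σ : Equiv.Perm (Fin (n + 1)), ∀ x, g (x ∘ σ) = g x) →
        L (n + 2) (fun x => ∑ i : Fin (n + 2), g (x ∘ i.succAbove))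
          = fun x => ∑ i : Fin (n + 2), L (n + 1) g (x ∘ i.succAbove))
    (μ : ∀ n : ℕ, (Fin n → V) → ℝ)
    (hnonneg : ∀ n x, 0 ≤ μ n x)
    (hsum : ∀ n : ℕ, 1 ≤ n → ∑ x : Fin n → V, μ n x = 1)
    (hμperm : ∀ n : ℕ, ∀ σ : Equiv.Perm (Fin n), ∀ x : Fin n → V, μ n (x ∘ σ) = μ n x)
    (hμcons : ∀ n : ℕ, ∀ x : Fin n → V, ∑ y : V, μ (n + 1) (Fin.snoc x y) = μ n x)
    (t : ℝ) (ht : 0 ≤ t)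
    (n : ℕ) (g : (Fin (n + 1) → V) → ℝ)
    (hg : ∀ σ : Equiv.Perm (Fin (n + 1)), ∀ x, g (x ∘ σ) = g x) :
    ∑ x : Fin (n + 2) → V,
        μ (n + 2) x * expOp t (L (n + 2)) (fun y => g (Fin.init y)) x
      = ∑ x : Fin (n + 1) → V, μ (n + 1) x * expOp t (L (n + 1)) g x :=
  stmt3_general L hperm hint μ hμperm hμcons t n g hg
end

section
/- Let V be a type, and let 𝒢 : (V →₀ ℕ) → [0,1) → ℝ satisfy: (i) for every configuration η, the map z ↦ 𝒢(η,z) is continuous on [0,1); (ii) 𝒢(η,·) ≡ 0 whenever |η| ≤ 1; (iii) for every η with n := |η| ≥ 2 and every z ∈ [0,1): 𝒢(η,z) = (1−z)^n · 𝒢(η,0) + (1−z)^n · ∫_0^z (1−u)^{−(n+1)} · (Σ_{i ∈ η.support} η_i · 𝒢(η − δ_i, u)) du. Then for every n ≥ 2, every x = (x_1,…,x_n) ∈ V^n and every z ∈ [0,1): 𝒢(φ(x), z) = Σ_{κ=2}^n z^{n−κ}·(1−z)^κ · Σ_{S ⊆ {1,…,n}, |S| = κ} 𝒢(φ(x|_S),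 0), where x|_S denotes the subfamily (x_i)_{i ∈ S}. -/
/-- `φ((xᵢ)_{i ∈ S}) = ∑_{i ∈ S} δ_{xᵢ}` : the configuration of a subfamily of labeled
particle positions. -/
noncomputable def phiSub {V : Type*} {n : ℕ} (x : Fin n → V) (S : Finset (Fin n)) :
    V →₀ ℕ := ∑ i ∈ S, Finsupp.single (x i) 1

/-!
Strong induction on the subsample `S`; for `#S ≤ 1` both sides vanish. Removing the particle
of index `j` from `φ(x|_S)` leaves `φ(x|_{S \ j})`, so the sum in the recursion is
`∑_{j ∈ S} 𝒢(φ(x|_{S \ j}), u)`, a polynomial in `u` by induction, in which every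
`κ`-subsample of `S` is counted `#S - κ` times. The recursion then integrates it term by term,
`(u / (1 - u)) ^ m` being an antiderivative of `m u^(m-1) / (1 - u)^(m+1)`.
-/

open Finset

section phiSub

variable {V : Type*} {n : ℕ} (x : Fin n → V)

lemma phiSub_apply [DecidableEq V] (S : Finset (Fin n)) (v : V) :
    phiSub x S v = #{j ∈ S | x j = v} := by
  rw [phiSub, Finsupp.finsetSum_apply, card_filter]
  exact sum_congr rfl fun j _ => Finsupp.single_apply

lemma support_phiSub [DecidableEq V] (S : Finset (Fin n)) :
    (phiSub x S).support = S.image x := by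
  ext v
  rw [Finsupp.mem_support_iff, phiSub_apply, mem_image, ← Nat.pos_iff_ne_zero, card_pos,
    filter_nonempty_iff]

lemma sum_support_phiSub (S : Finset (Fin n)) :
    ∑ v ∈ (phiSub x S).support, phiSub x S v = #S := by
  change (phiSub x S).sum (fun _ m => m) = #S
  rw [phiSub, ← Finsupp.sum_finsetSum_index (fun _ => rfl) (fun _ _ _ => rfl)]
  simp

lemma phiSub_sub_single {S : Finset (Fin n)} {j : Fin n} (hj : j ∈ S) :
    phiSub x S - Finsupp.single (x j) 1 = phiSub x (S.erase j) := by
  rw [phiSub, ← add_sum_erase S _ hj, add_tsub_cancel_left]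
  rfl

lemma sum_support_phiSub_mul {R : Type*} [Semiring R] (S : Finset (Fin n)) (g : V → R) :
    ∑ v ∈ (phiSub x S).support, (phiSub x S v : R) * g v = ∑ j ∈ S, g (x j) := by
  classical
  rw [sum_comp g x, support_phiSub]
  exact sum_congr rfl fun v _ => by rw [phiSub_apply, nsmul_eq_mul]

lemma sum_support_phiSub_mul_sub_single {R : Type*} [Semiring R] (S : Finset (Fin n))
    (f : (V →₀ ℕ) → R) :
    ∑ v ∈ (phiSub x S).support, (phiSub x S v : R) * f (phiSub x S - Finsupp.single v 1)
      = ∑ j ∈ S, f (phiSub x (S.erase j)) := by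
  rw [sum_support_phiSub_mul x S (fun v => f (phiSub x S - Finsupp.single v 1))]
  exact sum_congr rfl fun j hj => by rw [phiSub_sub_single x hj]

end phiSub

/-- Each `κ`-subset of `S` avoids exactly `#S - κ` points of `S`. -/
lemma sum_sum_powersetCard_erase {ι M : Type*} [DecidableEq ι] [AddCommMonoid M]
    (S : Finset ι) (κ : ℕ) (g : Finset ι → M) :
    ∑ j ∈ S, ∑ T ∈ (S.erase j).powersetCard κ, g T
      = (#S - κ) • ∑ T ∈ S.powersetCard κ, g T := by
  have hfilter : ∀ j, (S.erase j).powersetCard κ = {T ∈ S.powersetCard κ | j ∉ T} := by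
    intro j
    ext T
    simp [mem_powersetCard, subset_erase, and_assoc, and_comm]
  simp_rw [hfilter, sum_filter]
  rw [sum_comm, smul_sum]
  refine sum_congr rfl fun T hT => ?_
  obtain ⟨hTS, hTcard⟩ := mem_powersetCard.mp hT
  rw [← sum_filter, sum_const, ← sdiff_eq_filter, card_sdiff_of_subset hTS, hTcard]

lemma mem_Ico_of_mem_uIcc {w u : ℝ} (hw : w ∈ Set.Ico 0 1) (hu : u ∈ Set.uIcc 0 w) :
    u ∈ Set.Ico 0 1 := by
  rw [Set.uIcc_of_le hw.1] at hu
  exact ⟨hu.1, hu.2.trans_lt hw.2⟩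

lemma one_sub_ne_zero_of_mem_uIcc {w u : ℝ} (hw : w ∈ Set.Ico 0 1) (hu : u ∈ Set.uIcc 0 w) :
    1 - u ≠ 0 :=
  (sub_pos.2 (mem_Ico_of_mem_uIcc hw hu).2).ne'

lemma intervalIntegrable_pow_div_one_sub_pow (m : ℕ) {w : ℝ} (hw : w ∈ Set.Ico 0 1) :
    IntervalIntegrable (fun u : ℝ => (m + 1) * u ^ m / (1 - u) ^ (m + 2))
      MeasureTheory.volume 0 w :=
  (ContinuousOn.div (by fun_prop) (by fun_prop) fun _ hu =>
    pow_ne_zero _ (one_sub_ne_zero_of_mem_uIcc hw hu)).intervalIntegrable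

lemma integral_pow_div_one_sub_pow (m : ℕ) {w : ℝ} (hw : w ∈ Set.Ico 0 1) :
    ∫ u in (0 : ℝ)..w, (m + 1) * u ^ m / (1 - u) ^ (m + 2) = (w / (1 - w)) ^ (m + 1) := by
  have hderiv : ∀ u ∈ Set.uIcc 0 w,
      HasDerivAt (fun u => (u / (1 - u)) ^ (m + 1)) ((m + 1) * u ^ m / (1 - u) ^ (m + 2)) u := by
    intro u hu
    have hne := one_sub_ne_zero_of_mem_uIcc hw hu
    have hquot : HasDerivAt (fun u => u / (1 - u)) ((1 * (1 - u) - u * (0 - 1)) / (1 - u) ^ 2) u :=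
      (hasDerivAt_id u).div ((hasDerivAt_const u 1).sub (hasDerivAt_id u)) hne
    refine (hquot.fun_pow (m + 1)).congr_deriv ?_
    rw [Nat.add_sub_cancel, div_pow]
    field_simp
    push_cast
    ring
  rw [intervalIntegral.integral_eq_sub_of_hasDerivAt hderiv
    (intervalIntegrable_pow_div_one_sub_pow m hw)]
  simp

lemma one_sub_pow_mul_integral_sum (k : ℕ) (s : Finset ℕ) (hs : ∀ κ ∈ s, κ < k) (C : ℕ → ℝ)
    {w : ℝ} (hw : w ∈ Set.Ico 0 1) :
    (1 - w) ^ k * ∫ u in (0 : ℝ)..w, ((1 - u) ^ (k + 1))⁻¹ *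
        ∑ κ ∈ s, ((k - κ : ℕ) : ℝ) * (u ^ (k - 1 - κ) * (1 - u) ^ κ) * C κ
      = ∑ κ ∈ s, w ^ (k - κ) * (1 - w) ^ κ * C κ := by
  have hintegrand : Set.EqOn
      (fun u => ((1 - u) ^ (k + 1))⁻¹ *
        ∑ κ ∈ s, ((k - κ : ℕ) : ℝ) * (u ^ (k - 1 - κ) * (1 - u) ^ κ) * C κ)
      (fun u => ∑ κ ∈ s, C κ * ((((k - κ - 1 : ℕ) : ℝ) + 1) * u ^ (k - κ - 1)
        / (1 - u) ^ (k - κ - 1 + 2))) (Set.uIcc 0 w) := by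
    intro u hu
    have hne := one_sub_ne_zero_of_mem_uIcc hw hu
    simp only [mul_sum]
    refine sum_congr rfl fun κ hκ => ?_
    obtain ⟨m, hm⟩ : ∃ m, k = κ + m + 1 := ⟨k - κ - 1, by have := hs κ hκ; omega⟩
    rw [show k - κ - 1 = m by omega, show k - κ = m + 1 by omega, show k - 1 - κ = m by omega, hm]
    field_simp
    push_cast
    ring
  rw [intervalIntegral.integral_congr hintegrand, intervalIntegral.integral_finsetSum
    fun κ _ => (intervalIntegrable_pow_div_one_sub_pow _ hw).const_mul _, mul_sum]
  refine sum_congr rfl fun κ hκ => ?_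
  obtain ⟨m, hm⟩ : ∃ m, k = κ + m + 1 := ⟨k - κ - 1, by have := hs κ hκ; omega⟩
  have hne : 1 - w ≠ 0 := (sub_pos.2 hw.2).ne'
  rw [intervalIntegral.integral_const_mul, integral_pow_div_one_sub_pow _ hw,
    show k - κ - 1 + 1 = k - κ by omega, show k - κ = m + 1 by omega, hm, div_pow]
  field_simp
  ring

theorem apply_phiSub_eq_sum_powersetCard {V : Type*} (G : (V →₀ ℕ) → ℝ → ℝ)
    (hone : ∀ η : V →₀ ℕ, (∑ x ∈ η.support, η x) ≤ 1 →
        ∀ z ∈ Set.Ico (0 : ℝ) 1, G η z = 0)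
    (hrec : ∀ η : V →₀ ℕ, 2 ≤ ∑ x ∈ η.support, η x →
        ∀ z ∈ Set.Ico (0 : ℝ) 1,
        G η z = (1 - z) ^ (∑ x ∈ η.support, η x) * G η 0
          + (1 - z) ^ (∑ x ∈ η.support, η x) *
            ∫ u in (0 : ℝ)..z,
              ((1 - u) ^ ((∑ x ∈ η.support, η x) + 1))⁻¹ *
                ∑ i ∈ η.support, (η i : ℝ) * G (η - Finsupp.single i 1) u)
    {n : ℕ} (x : Fin n → V) (S : Finset (Fin n)) :
    ∀ w ∈ Set.Ico (0 : ℝ) 1, G (phiSub x S) w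
      = ∑ κ ∈ Icc 2 #S, w ^ (#S - κ) * (1 - w) ^ κ * ∑ T ∈ S.powersetCard κ, G (phiSub x T) 0 := by
  classical
  induction S using Finset.strongInduction with
  | H S ih =>
  intro w hw
  rcases le_or_gt #S 1 with hS | hS
  · rw [hone _ (by rwa [sum_support_phiSub]) w hw, Icc_eq_empty (by omega), sum_empty]
  have hsum : ∀ u ∈ Set.uIcc 0 w,
      ∑ v ∈ (phiSub x S).support, (phiSub x S v : ℝ) * G (phiSub x S - Finsupp.single v 1) u
        = ∑ κ ∈ Icc 2 (#S - 1), ((#S - κ : ℕ) : ℝ) * (u ^ (#S - 1 - κ) * (1 - u) ^ κ) *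
            ∑ T ∈ S.powersetCard κ, G (phiSub x T) 0 := by
    intro u hu
    rw [sum_support_phiSub_mul_sub_single x S (G · u), sum_congr rfl fun j hj => by
      rw [ih _ (erase_ssubset hj) u (mem_Ico_of_mem_uIcc hw hu), card_erase_of_mem hj], sum_comm]
    refine sum_congr rfl fun κ _ => ?_
    rw [← mul_sum, sum_sum_powersetCard_erase, nsmul_eq_mul]
    ring
  rw [hrec _ (by rw [sum_support_phiSub]; omega) w hw, sum_support_phiSub,
    intervalIntegral.integral_congr fun u hu => congrArg _ (hsum u hu),
    one_sub_pow_mul_integral_sum _ _ (fun κ hκ => by rw [mem_Icc] at hκ; omega) _ hw,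
    ← insert_Icc_sub_one_right_eq_Icc (by omega : 2 ≤ #S), sum_insert (by rw [mem_Icc]; omega),
    Nat.sub_self, pow_zero, one_mul, powersetCard_self, sum_singleton]

theorem stmt5_general {V : Type*}
    (G : (V →₀ ℕ) → ℝ → ℝ)
    (hone : ∀ η : V →₀ ℕ, (∑ x ∈ η.support, η x) ≤ 1 →
        ∀ z ∈ Set.Ico (0 : ℝ) 1, G η z = 0)
    (hrec : ∀ η : V →₀ ℕ, 2 ≤ ∑ x ∈ η.support, η x →
        ∀ z ∈ Set.Ico (0 : ℝ) 1,
        G η z = (1 - z) ^ (∑ x ∈ η.support, η x) * G η 0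
          + (1 - z) ^ (∑ x ∈ η.support, η x) *
            ∫ u in (0 : ℝ)..z,
              ((1 - u) ^ ((∑ x ∈ η.support, η x) + 1))⁻¹ *
                ∑ i ∈ η.support, (η i : ℝ) * G (η - Finsupp.single i 1) u)
    (n : ℕ) (x : Fin n → V) (z : ℝ) (hz : z ∈ Set.Ico (0 : ℝ) 1) :
    G (phiSub x Finset.univ) z
      = ∑ κ ∈ Finset.Icc 2 n, z ^ (n - κ) * (1 - z) ^ κ *
          ∑ S ∈ Finset.powersetCard κ (Finset.univ : Finset (Fin n)),
            G (phiSub x S) 0 := by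
  simpa using apply_phiSub_eq_sum_powersetCard G hone hrec x univ z hz

/-- **The difference of generating functions is determined by its values at 0**
(Theorem 5.2): if `𝒢` is continuous in `z`, vanishes on configurations with at most one
particle, and satisfies the integrated consistency recursion, then on the configuration
of `n ≥ 2` particles at positions `x` it is given by the stated polynomial in `z` with
coefficients the values `𝒢(·,0)` on `κ`-element subsamples. -/
theorem stmt5 {V : Type*}
    (G : (V →₀ ℕ) → ℝ → ℝ)
    (hcont : ∀ η : V →₀ ℕ, ContinuousOn (G η) (Set.Ico 0 1))
    (hone : ∀ η : V →₀ ℕ, (∑ x ∈ η.support, η x) ≤ 1 →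
        ∀ z ∈ Set.Ico (0 : ℝ) 1, G η z = 0)
    (hrec : ∀ η : V →₀ ℕ, 2 ≤ ∑ x ∈ η.support, η x →
        ∀ z ∈ Set.Ico (0 : ℝ) 1,
        G η z = (1 - z) ^ (∑ x ∈ η.support, η x) * G η 0
          + (1 - z) ^ (∑ x ∈ η.support, η x) *
            ∫ u in (0 : ℝ)..z,
              ((1 - u) ^ ((∑ x ∈ η.support, η x) + 1))⁻¹ *
                ∑ i ∈ η.support, (η i : ℝ) * G (η - Finsupp.single i 1) u)
    (n : ℕ) (hn : 2 ≤ n) (x : Fin n → V) (z : ℝ) (hz : z ∈ Set.Ico (0 : ℝ) 1) :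
    G (phiSub x Finset.univ) z
      = ∑ κ ∈ Finset.Icc 2 n, z ^ (n - κ) * (1 - z) ^ κ *
          ∑ S ∈ Finset.powersetCard κ (Finset.univ : Finset (Fin n)),
            G (phiSub x S) 0 :=
  stmt5_general G hone hrec n x z hz
end

section
/- Let V be a finite type, θ ∈ ℝ, and p : V × V → ℝ a symmetric function (p(i,j) = p(j,i)). Define the generator ℒ_θ on functions f : (V →₀ ℕ) → ℝ by (ℒ_θ f)(η) := Σ_{i ≠ j in V} p(i,j) · η_i · (1 + θ·η_j) · (f(η − δ_i + δ_j) − f(η)) (terms with η_i = 0 carry zero coefficient). Then ℒ_θ commutes with the annihilation operator: ℒ_θ ∘ 𝒜 = 𝒜 ∘ ℒ_θ. -/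
/-- The generator `ℒ_θ` interpolating between independent random walkers (`θ = 0`),
the symmetric inclusion process (`θ > 0`) and the symmetric partial exclusion
process (`θ < 0`). -/
noncomputable def genTheta {V : Type*} [Fintype V] [DecidableEq V] (θ : ℝ)
    (p : V × V → ℝ) (f : (V →₀ ℕ) → ℝ) : (V →₀ ℕ) → ℝ :=
  fun η => ∑ i : V, ∑ j ∈ Finset.univ.erase i,
    p (i, j) * (η i : ℝ) * (1 + θ * (η j : ℝ)) *
      (f (η - Finsupp.single i 1 + Finsupp.single j 1) - f η)

private lemma ann_univ {V : Type*} [Fintype V] (f : (V →₀ ℕ) → ℝ) (η : V →₀ ℕ) :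
    ann f η = ∑ x : V, (η x : ℝ) * f (η - Finsupp.single x 1) := by
  unfold ann
  exact Finset.sum_subset (Finset.subset_univ _) fun x _ hx => by
    rw [Finsupp.notMem_support_iff.mp hx]; simp

private lemma move_single {V : Type*} [DecidableEq V] (μ : V →₀ ℕ) {x j : V} (hxj : x ≠ j) :
    μ + Finsupp.single j 1 - Finsupp.single x 1
      = μ - Finsupp.single x 1 + Finsupp.single j 1 := by
  ext a
  simp only [Finsupp.add_apply, Finsupp.tsub_apply, Finsupp.single_apply]
  by_cases h1 : j = a
  · by_cases h2 : x = a
    · exact absurd (h2.trans h1.symm) hxj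
    · simp [h1, h2]
  · by_cases h2 : x = a <;> simp [h1, h2]

private lemma sub_sub_comm' {V : Type*} [DecidableEq V] (μ : V →₀ ℕ) (x y : V) :
    μ - Finsupp.single x 1 - Finsupp.single y 1
      = μ - Finsupp.single y 1 - Finsupp.single x 1 := by
  ext a
  simp only [Finsupp.tsub_apply]
  omega

private lemma finsupp_add_sub_cancel {V : Type*} [DecidableEq V] (μ : V →₀ ℕ) (j : V) :
    μ + Finsupp.single j 1 - Finsupp.single j 1 = μ := by
  ext a
  simp only [Finsupp.add_apply, Finsupp.tsub_apply]
  omega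

private lemma finsupp_sub_add_cancel {V : Type*} [DecidableEq V] (μ : V →₀ ℕ) {j : V}
    (hj : 1 ≤ μ j) :
    μ - Finsupp.single j 1 + Finsupp.single j 1 = μ := by
  ext a
  simp only [Finsupp.add_apply, Finsupp.tsub_apply, Finsupp.single_apply]
  by_cases h : j = a
  · subst h; simp; omega
  · simp [h]

private lemma sum_split {V : Type*} [Fintype V] [DecidableEq V] (D : V → ℝ) {i j : V}
    (hij : i ≠ j) (h0 : ∀ x, x ≠ i → x ≠ j → D x = 0) :
    ∑ x : V, D x = D i + D j := by
  rw [← Finset.sum_erase_add _ _ (Finset.mem_univ i),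
      ← Finset.sum_erase_add _ _ (Finset.mem_erase.mpr ⟨Ne.symm hij, Finset.mem_univ j⟩)]
  rw [Finset.sum_eq_zero fun x hx =>
    h0 x (Finset.mem_erase.mp (Finset.mem_erase.mp hx).2).1 (Finset.mem_erase.mp hx).1]
  rw [zero_add, add_comm]

private lemma sum_erase_antisymm {V : Type*} [Fintype V] [DecidableEq V] (F : V → V → ℝ)
    (h : ∀ i j, F i j = - F j i) :
    ∑ i : V, ∑ j ∈ Finset.univ.erase i, F i j = 0 := by
  have key : ∑ i : V, ∑ j ∈ Finset.univ.erase i, F i j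
      = ∑ i : V, ∑ j : V, if j = i then 0 else F i j := by
    refine Finset.sum_congr rfl fun i _ => ?_
    rw [show (∑ j ∈ Finset.univ.erase i, F i j)
        = ∑ j ∈ Finset.univ.erase i, (if j = i then 0 else F i j) from
      Finset.sum_congr rfl fun j hj => (if_neg (Finset.mem_erase.mp hj).1).symm]
    exact Finset.sum_erase _ (by simp)
  rw [key]
  have h2 : (∑ i : V, ∑ j : V, if j = i then 0 else F i j)
      = - ∑ i : V, ∑ j : V, (if j = i then 0 else F i j) := by
    calc (∑ i : V, ∑ j : V, if j = i then 0 else F i j)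
        = ∑ j : V, ∑ i : V, (if j = i then 0 else F i j) := Finset.sum_comm
      _ = ∑ i : V, ∑ j : V, (if i = j then 0 else F j i) := rfl
      _ = ∑ i : V, ∑ j : V, -(if j = i then 0 else F i j) := by
          refine Finset.sum_congr rfl fun i _ => Finset.sum_congr rfl fun j _ => ?_
          by_cases hji : j = i
          · simp [hji]
          · rw [if_neg (fun hh => hji hh.symm), if_neg hji]
            exact h j i
      _ = - ∑ i : V, ∑ j : V, (if j = i then 0 else F i j) := by
          simp
  linarith [h2]

private lemma triple_swap {V : Type*} [Fintype V] [DecidableEq V] (A : V → V → V → ℝ) :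
    ∑ x : V, ∑ i : V, ∑ j ∈ Finset.univ.erase i, A x i j
      = ∑ i : V, ∑ j ∈ Finset.univ.erase i, ∑ x : V, A x i j := by
  rw [Finset.sum_comm]
  exact Finset.sum_congr rfl fun i _ => Finset.sum_comm

private lemma pair_key {V : Type*} [Fintype V] [DecidableEq V] (θ c : ℝ) (f : (V →₀ ℕ) → ℝ)
    (η : V →₀ ℕ) {i j : V} (hij : i ≠ j) :
    c * (η i : ℝ) * (1 + θ * (η j : ℝ)) *
        ((∑ x : V, ((η - Finsupp.single i 1 + Finsupp.single j 1 : V →₀ ℕ) x : ℝ) *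
            f (η - Finsupp.single i 1 + Finsupp.single j 1 - Finsupp.single x 1)) -
          ∑ x : V, (η x : ℝ) * f (η - Finsupp.single x 1)) -
      ∑ x : V, (η x : ℝ) *
        (c * ((η - Finsupp.single x 1 : V →₀ ℕ) i : ℝ) *
          (1 + θ * ((η - Finsupp.single x 1 : V →₀ ℕ) j : ℝ)) *
          (f (η - Finsupp.single x 1 - Finsupp.single i 1 + Finsupp.single j 1) -
            f (η - Finsupp.single x 1))) =
      θ * c * (η i : ℝ) * (η j : ℝ) *
        (f (η - Finsupp.single i 1) - f (η - Finsupp.single j 1)) := by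
  rcases Nat.eq_zero_or_pos (η i) with hi | hi
  · have hz : ∀ x ∈ (Finset.univ : Finset V), (η x : ℝ) *
        (c * ((η - Finsupp.single x 1 : V →₀ ℕ) i : ℝ) *
          (1 + θ * ((η - Finsupp.single x 1 : V →₀ ℕ) j : ℝ)) *
          (f (η - Finsupp.single x 1 - Finsupp.single i 1 + Finsupp.single j 1) -
            f (η - Finsupp.single x 1))) = 0 := by
      intro x _
      rcases eq_or_ne x i with rfl | hxi
      · rw [hi]; simp
      · have hzi : (η - Finsupp.single x 1 : V →₀ ℕ) i = 0 := by
          simp [Finsupp.tsub_apply, Finsupp.single_apply, hxi, hi]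
        rw [hzi]; simp
    rw [Finset.sum_eq_zero hz, hi]
    simp
  · have hi1 : 1 ≤ η i := hi
    rw [mul_sub, Finset.mul_sum, Finset.mul_sum, ← Finset.sum_sub_distrib,
        ← Finset.sum_sub_distrib]
    refine (sum_split _ hij fun x hxi hxj => ?_).trans ?_
    · have a1 : (η - Finsupp.single i 1 + Finsupp.single j 1 : V →₀ ℕ) x = η x := by
        simp [Finsupp.add_apply, Finsupp.tsub_apply, Finsupp.single_apply,
          Ne.symm hxi, Ne.symm hxj]
      have a2 : η - Finsupp.single i 1 + Finsupp.single j 1 - Finsupp.single x 1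
          = η - Finsupp.single x 1 - Finsupp.single i 1 + Finsupp.single j 1 := by
        rw [move_single _ hxj, sub_sub_comm' η i x]
      have a3 : (η - Finsupp.single x 1 : V →₀ ℕ) i = η i := by
        simp [Finsupp.tsub_apply, Finsupp.single_apply, hxi]
      have a4 : (η - Finsupp.single x 1 : V →₀ ℕ) j = η j := by
        simp [Finsupp.tsub_apply, Finsupp.single_apply, hxj]
      rw [a1, a2, a3, a4]
      ring
    · have b1 : (η - Finsupp.single i 1 + Finsupp.single j 1 : V →₀ ℕ) i = η i - 1 := by
        simp [Finsupp.add_apply, Finsupp.tsub_apply, Finsupp.single_apply, Ne.symm hij]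
      have b2 : (η - Finsupp.single i 1 + Finsupp.single j 1 : V →₀ ℕ) j = η j + 1 := by
        simp [Finsupp.add_apply, Finsupp.tsub_apply, Finsupp.single_apply, hij]
      have b3 : η - Finsupp.single i 1 + Finsupp.single j 1 - Finsupp.single i 1
          = η - Finsupp.single i 1 - Finsupp.single i 1 + Finsupp.single j 1 :=
        move_single _ hij
      have b4 : η - Finsupp.single i 1 + Finsupp.single j 1 - Finsupp.single j 1
          = η - Finsupp.single i 1 := finsupp_add_sub_cancel _ j
      have b5 : (η - Finsupp.single i 1 : V →₀ ℕ) i = η i - 1 := by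
        simp [Finsupp.tsub_apply, Finsupp.single_apply]
      have b6 : (η - Finsupp.single i 1 : V →₀ ℕ) j = η j := by
        simp [Finsupp.tsub_apply, Finsupp.single_apply, hij]
      have b7 : (η - Finsupp.single j 1 : V →₀ ℕ) i = η i := by
        simp [Finsupp.tsub_apply, Finsupp.single_apply, Ne.symm hij]
      have b8 : (η - Finsupp.single j 1 : V →₀ ℕ) j = η j - 1 := by
        simp [Finsupp.tsub_apply, Finsupp.single_apply]
      rw [b1, b2, b3, b4, b5, b6, b7, b8]
      rcases Nat.eq_zero_or_pos (η j) with hj | hj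
      · rw [hj]
        push_cast [Nat.cast_sub hi1, Nat.zero_sub]
        ring
      · have b9 : η - Finsupp.single j 1 - Finsupp.single i 1 + Finsupp.single j 1
            = η - Finsupp.single i 1 := by
          rw [sub_sub_comm' η j i]
          exact finsupp_sub_add_cancel _ (by rw [b6]; exact hj)
        rw [b9]
        push_cast [Nat.cast_sub hi1, Nat.cast_sub hj]
        ring

/-- **Consistency of the SEP/IRW/SIP class** (Section 6): for symmetric `p`, the
generator `ℒ_θ` commutes with the annihilation operator, for every `θ ∈ ℝ`. -/
theorem stmt12 {V : Type*} [Fintype V] [DecidableEq V] (θ : ℝ)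
    (p : V × V → ℝ) (hp : ∀ i j, p (i, j) = p (j, i)) :
    ∀ f : (V →₀ ℕ) → ℝ, genTheta θ p (ann f) = ann (genTheta θ p f) := by
  intro f
  funext η
  simp only [genTheta, ann_univ]
  simp_rw [Finset.mul_sum]
  rw [triple_swap, ← sub_eq_zero, ← Finset.sum_sub_distrib]
  have hF := sum_erase_antisymm
      (fun i j => θ * p (i, j) * (η i : ℝ) * (η j : ℝ) *
        (f (η - Finsupp.single i 1) - f (η - Finsupp.single j 1)))
      (fun i j => by beta_reduce; rw [hp i j]; ring)
  rw [← hF]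
  refine Finset.sum_congr rfl fun i _ => ?_
  rw [← Finset.sum_sub_distrib]
  refine Finset.sum_congr rfl fun j hj => ?_
  exact pair_key θ (p (i, j)) f η (Ne.symm (Finset.mem_erase.mp hj).1)
end

section
/- For all finitely supported configurations ξ, η : V →₀ ℕ: Σ_{x ∈ η.support} (η_x : ℤ) · F(ξ, η − δ_x) = (|η| − |ξ|) · F(ξ, η) (an identity in ℤ, with |η| := Σ_x η_x and |ξ| := Σ_x ξ_x). Equivalently, the annihilation operator applied to F(ξ, ·) in its second argument gives (𝒜 F(ξ,·))(η) = (|η| − |ξ|)·F(ξ,η). -/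
lemma key_choose (n k : ℕ) :
    (n : ℤ) * ((n - 1).choose k : ℤ) = ((n : ℤ) - k) * (n.choose k : ℤ) := by
  cases n with
  | zero =>
    cases k with
    | zero => simp
    | succ j => simp [Nat.choose_eq_zero_of_lt (Nat.succ_pos j)]
  | succ m =>
    cases k with
    | zero => simp
    | succ j =>
      have h := Nat.add_one_mul_choose_eq m j
      have h' : ((m : ℤ) + 1) * (m.choose j : ℤ)
          = ((m + 1).choose (j + 1) : ℤ) * ((j : ℤ) + 1) := by
        exact_mod_cast congrArg (Nat.cast : ℕ → ℤ) h
      have pascal : ((m + 1).choose (j + 1) : ℤ)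
          = (m.choose j : ℤ) + (m.choose (j + 1) : ℤ) := by
        exact_mod_cast congrArg (Nat.cast : ℕ → ℤ) (Nat.choose_succ_succ m j)
      simp only [Nat.add_sub_cancel]
      push_cast
      linear_combination -h' - ((m : ℤ) + 1) * pascal

lemma term_eq {V : Type*} (ξ η : V →₀ ℕ) (x : V) :
    (η x : ℤ) * (Ffun ξ (η - Finsupp.single x 1) : ℤ)
      = ((η x : ℤ) - (ξ x : ℤ)) * (Ffun ξ η : ℤ) := by
  classical
  by_cases hx : x ∈ ξ.support
  · unfold Ffun
    rw [← Finset.prod_erase_mul _ _ hx, ← Finset.prod_erase_mul _ _ hx]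
    have hsame : ∀ y ∈ ξ.support.erase x,
        ((η - Finsupp.single x 1 : V →₀ ℕ) y).choose (ξ y) = (η y).choose (ξ y) := by
      intro y hy
      have hne : y ≠ x := Finset.ne_of_mem_erase hy
      simp [Finsupp.sub_apply, Finsupp.single_apply, (Ne.symm hne)]
    rw [Finset.prod_congr rfl hsame]
    have hval : (η - Finsupp.single x 1 : V →₀ ℕ) x = η x - 1 := by
      simp [Finsupp.sub_apply, Finsupp.single_apply]
    rw [hval]
    push_cast
    linear_combination (∏ y ∈ ξ.support.erase x, ((η y).choose (ξ y) : ℤ)) *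
      key_choose (η x) (ξ x)
  · have hF : Ffun ξ (η - Finsupp.single x 1) = Ffun ξ η := by
      unfold Ffun
      refine Finset.prod_congr rfl fun y hy => ?_
      have hne : y ≠ x := fun h => hx (h ▸ hy)
      simp [Finsupp.sub_apply, Finsupp.single_apply, (Ne.symm hne)]
    have hz : ξ x = 0 := Finsupp.notMem_support_iff.mp hx
    rw [hF, hz]
    simp

/-- **The binomial identity `𝒜 F(ξ,·) = (|η|-|ξ|) F(ξ,·)`** (proof of Proposition 3.2):
`∑_x η_x F(ξ, η - δ_x) = (|η| - |ξ|) F(ξ, η)` as an identity in `ℤ`. -/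
theorem stmt15 {V : Type*} (ξ η : V →₀ ℕ) :
    ∑ x ∈ η.support, (η x : ℤ) * (Ffun ξ (η - Finsupp.single x 1) : ℤ)
      = ((∑ x ∈ η.support, (η x : ℤ)) - ∑ x ∈ ξ.support, (ξ x : ℤ)) * (Ffun ξ η : ℤ) := by
  classical
  have hterm : ∑ x ∈ η.support, (η x : ℤ) * (Ffun ξ (η - Finsupp.single x 1) : ℤ)
      = ((∑ x ∈ η.support, (η x : ℤ)) - ∑ x ∈ η.support, (ξ x : ℤ)) * (Ffun ξ η : ℤ) := by
    rw [sub_mul, Finset.sum_mul, Finset.sum_mul, ← Finset.sum_sub_distrib]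
    refine Finset.sum_congr rfl fun x _ => ?_
    rw [term_eq, sub_mul]
  rw [hterm]
  by_cases hsub : ξ.support ⊆ η.support
  · congr 2
    refine (Finset.sum_subset hsub fun x _ hx => ?_).symm
    simp [Finsupp.notMem_support_iff.mp hx]
  · obtain ⟨x0, hx0, hx0'⟩ := Finset.not_subset.mp hsub
    have hz : η x0 = 0 := Finsupp.notMem_support_iff.mp hx0'
    have hF : Ffun ξ η = 0 := by
      refine Finset.prod_eq_zero hx0 ?_
      rw [hz]
      exact Nat.choose_eq_zero_of_lt (Nat.pos_of_ne_zero (Finsupp.mem_support_iff.mp hx0))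
    rw [hF]
    simp
end

section
/- Let V be a type and G : (V →₀ ℕ) → [0,1) → ℝ be such that: (i) for each configuration η, z ↦ G(η,z) is differentiable on [0,1); (ii) G(0,·) ≡ 1 (where 0 is the empty configuration); (iii) for every η with |η| ≥ 1 and every z ∈ [0,1): (1−z)·∂_z G(η,z) + |η|·G(η,z) = Σ_{i ∈ η.support} η_i · G(η − δ_i, z); and (iv) the values at z = 0 factorize: G(ξ,0) = Π_{i ∈ ξ.support} G(δ_i, 0)^{ξ_i} for every ξ. Then the full generating functions factorize: G(ξ,z) = Π_{i ∈ ξ.support} G(δ_i, z)^{ξ_i} for every configuration ξ and every z ∈ [0,1). -/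
/-!
Write `P(ξ, z) = ∏ᵢ G(δᵢ, z) ^ ξᵢ`. The one-particle equations read `(1 - z) G(δᵢ)' + G(δᵢ) = 1`,
and the product rule together with `P(ξ) = G(δᵢ) P(ξ - δᵢ)` shows that `P` satisfies the same
recursion as `G`. By induction on `|ξ|` both sides of the recursion at `ξ` then agree, so
`G(ξ) - P(ξ)` solves `(1 - z) D' + |ξ| D = 0` with `D(0) = 0`; multiplying by the integrating
factor `(1 - z) ^ (-|ξ|)` shows `D ≡ 0` on `[0, 1)`.
-/

open Finsupp Set

theorem eqOn_zero_of_one_sub_mul_derivWithin_add_mul_eq_zero {c : ℝ} {f : ℝ → ℝ}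
    (hf : DifferentiableOn ℝ f (Ico 0 1)) (h0 : f 0 = 0)
    (hode : ∀ z ∈ Ico (0 : ℝ) 1, (1 - z) * derivWithin f (Ico 0 1) z + c * f z = 0) :
    EqOn f 0 (Ico 0 1) := by
  -- `F' = (1 - z) ^ (-c - 1) * ((1 - z) * f' + c * f)`
  set F : ℝ → ℝ := fun z => (1 - z) ^ (-c) * f z
  have hF' : ∀ z ∈ Ico (0 : ℝ) 1, HasDerivWithinAt F 0 (Ico 0 1) z := by
    intro z hz
    have hz1 : 1 - z ≠ 0 := by linarith [hz.2]
    have hpow : HasDerivWithinAt (fun w : ℝ => (1 - w) ^ (-c))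
        (-1 * -c * (1 - z) ^ (-c - 1)) (Ico 0 1) z :=
      ((hasDerivWithinAt_id z _).const_sub 1).rpow_const (Or.inl hz1)
    refine (hpow.mul (hf z hz).hasDerivWithinAt).congr_deriv ?_
    rw [Real.rpow_sub_one hz1]
    field_simp
    linear_combination (1 - z) ^ (-c) * hode z hz
  have hconst : ∀ z ∈ Ico (0 : ℝ) 1, F z = F 0 := fun z hz =>
    (convex_Ico 0 1).is_const_of_fderivWithin_eq_zero
      (fun w hw => (hF' w hw).differentiableWithinAt)
      (fun w hw => by
        rw [(hF' w hw).hasFDerivWithinAt.fderivWithin (uniqueDiffOn_Ico 0 1 w hw)]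
        simp)
      hz (left_mem_Ico.2 one_pos)
  intro z hz
  have hpos : 0 < (1 - z) ^ (-c) := Real.rpow_pos_of_pos (by linarith [hz.2]) _
  simpa [F, h0, hpos.ne'] using hconst z hz

theorem eqOn_of_one_sub_mul_derivWithin_add_mul_eq {c : ℝ} {f g : ℝ → ℝ}
    (hf : DifferentiableOn ℝ f (Ico 0 1)) (hg : DifferentiableOn ℝ g (Ico 0 1)) (h0 : f 0 = g 0)
    (hode : ∀ z ∈ Ico (0 : ℝ) 1, (1 - z) * derivWithin f (Ico 0 1) z + c * f z
      = (1 - z) * derivWithin g (Ico 0 1) z + c * g z) :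
    EqOn f g (Ico 0 1) := by
  have hzero := eqOn_zero_of_one_sub_mul_derivWithin_add_mul_eq_zero (c := c) (hf.sub hg)
    (sub_eq_zero.2 h0) fun z hz => by
      rw [derivWithin_sub (hf z hz) (hg z hz), Pi.sub_apply]
      linear_combination hode z hz
  exact fun z hz => sub_eq_zero.1 (hzero hz)

namespace Finsupp

variable {V : Type*} {ξ : V →₀ ℕ} {i : V}

theorem degree_tsub_single_add_one_s19 (hi : i ∈ ξ.support) :
    (ξ - single i 1).degree + 1 = ξ.degree := by
  have hle : single i 1 ≤ ξ := single_le_iff.2 (Nat.one_le_iff_ne_zero.2 (mem_support_iff.1 hi))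
  conv_rhs => rw [← tsub_add_cancel_of_le hle]
  rw [map_add, degree_single]

section CommMonoid

variable {M : Type*} [CommMonoid M] [DecidableEq V] (f : V → M)

theorem prod_pow_tsub_single (hi : i ∈ ξ.support) :
    (ξ - single i 1).prod (fun j k => f j ^ k)
      = f i ^ (ξ i - 1) * ∏ j ∈ ξ.support.erase i, f j ^ ξ j := by
  rw [prod_of_support_subset _ support_tsub _ fun _ _ => pow_zero _, ← Finset.mul_prod_erase _ _ hi]
  congr 1
  · simp
  · refine Finset.prod_congr rfl fun j hj => ?_
    rw [tsub_apply, single_eq_of_ne (Finset.ne_of_mem_erase hj), tsub_zero]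

theorem prod_pow_eq_mul_prod_pow_tsub_single (hi : i ∈ ξ.support) :
    ξ.prod (fun j k => f j ^ k) = f i * (ξ - single i 1).prod (fun j k => f j ^ k) := by
  rw [prod_pow_tsub_single f hi, ← mul_assoc, ← pow_succ', Nat.sub_add_cancel
    (Nat.one_le_iff_ne_zero.2 (mem_support_iff.1 hi))]
  exact (Finset.mul_prod_erase _ _ hi).symm

end CommMonoid

variable {g : V → ℝ → ℝ} {g' : V → ℝ} {s : Set ℝ} {z : ℝ}

theorem hasDerivWithinAt_prod_pow (hg : ∀ i, HasDerivWithinAt (g i) (g' i) s z) :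
    HasDerivWithinAt (fun w => ξ.prod fun i k => g i w ^ k)
      (∑ i ∈ ξ.support, (ξ i : ℝ) * g' i * (ξ - single i 1).prod fun j k => g j z ^ k) s z := by
  classical
  refine (HasDerivWithinAt.fun_finsetProd fun i _ => (hg i).fun_pow (ξ i)).congr_deriv ?_
  refine Finset.sum_congr rfl fun i hi => ?_
  rw [prod_pow_tsub_single _ hi, smul_eq_mul]
  ring

theorem one_sub_mul_derivWithin_prod_pow_add (hs : UniqueDiffWithinAt ℝ s z)
    (hg : ∀ i, HasDerivWithinAt (g i) (g' i) s z) (hode : ∀ i, (1 - z) * g' i + g i z = 1) :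
    (1 - z) * derivWithin (fun w => ξ.prod fun i k => g i w ^ k) s z
        + (ξ.degree : ℝ) * ξ.prod (fun i k => g i z ^ k)
      = ∑ i ∈ ξ.support, (ξ i : ℝ) * (ξ - single i 1).prod fun j k => g j z ^ k := by
  classical
  rw [(hasDerivWithinAt_prod_pow hg).derivWithin hs, degree_apply, Nat.cast_sum, Finset.mul_sum,
    Finset.sum_mul, ← Finset.sum_add_distrib]
  refine Finset.sum_congr rfl fun i hi => ?_
  rw [prod_pow_eq_mul_prod_pow_tsub_single _ hi]
  linear_combination (ξ i * (ξ - single i 1).prod fun j k => g j z ^ k) * hode i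

end Finsupp

/-- **Factorization of the generating function** (Remark, Section 7): if `G` satisfies
the consistency ODE `(1-z) ∂_z G(η,z) + |η| G(η,z) = ∑_i η_i G(η-δ_i,z)`, equals `1` on
the empty configuration, and its values at `z = 0` factorize over particles, then the
full generating functions factorize. -/
theorem stmt19 {V : Type*}
    (G : (V →₀ ℕ) → ℝ → ℝ)
    (hdiff : ∀ η : V →₀ ℕ, DifferentiableOn ℝ (G η) (Set.Ico 0 1))
    (hempty : ∀ z ∈ Set.Ico (0 : ℝ) 1, G 0 z = 1)
    (hode : ∀ η : V →₀ ℕ, 1 ≤ ∑ x ∈ η.support, η x →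
        ∀ z ∈ Set.Ico (0 : ℝ) 1,
        (1 - z) * derivWithin (G η) (Set.Ico 0 1) z
            + ((∑ x ∈ η.support, η x : ℕ) : ℝ) * G η z
          = ∑ i ∈ η.support, (η i : ℝ) * G (η - Finsupp.single i 1) z)
    (hfact0 : ∀ ξ : V →₀ ℕ, G ξ 0 = ∏ i ∈ ξ.support, G (Finsupp.single i 1) 0 ^ ξ i) :
    ∀ ξ : V →₀ ℕ, ∀ z ∈ Set.Ico (0 : ℝ) 1,
      G ξ z = ∏ i ∈ ξ.support, G (Finsupp.single i 1) z ^ ξ i := by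
  have hsingle : ∀ i, ∀ z ∈ Ico (0 : ℝ) 1,
      (1 - z) * derivWithin (G (single i 1)) (Ico 0 1) z + G (single i 1) z = 1 :=
    fun i z hz => by simpa [hempty z hz] using hode (single i 1) (by simp) z hz
  suffices ∀ n, ∀ ξ : V →₀ ℕ, ξ.degree = n →
      EqOn (G ξ) (fun z => ξ.prod fun i k => G (single i 1) z ^ k) (Ico 0 1) from
    fun ξ => this _ ξ rfl
  intro n
  induction n with
  | zero =>
    intro ξ hξ z hz
    simpa [(degree_eq_zero_iff ξ).1 hξ] using hempty z hz
  | succ n ih =>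
    intro ξ hξ
    have hderiv : ∀ z ∈ Ico (0 : ℝ) 1, ∀ i,
        HasDerivWithinAt (G (single i 1)) (derivWithin (G (single i 1)) (Ico 0 1) z) (Ico 0 1) z :=
      fun z hz i => (hdiff _ z hz).hasDerivWithinAt
    refine eqOn_of_one_sub_mul_derivWithin_add_mul_eq (c := ξ.degree) (hdiff ξ)
      (fun z hz => (hasDerivWithinAt_prod_pow (hderiv z hz)).differentiableWithinAt) (hfact0 ξ)
      fun z hz => ?_
    rw [one_sub_mul_derivWithin_prod_pow_add (uniqueDiffOn_Ico 0 1 z hz) (hderiv z hz)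
      (fun i => hsingle i z hz), degree_apply, hode ξ (by rw [← degree_apply, hξ]; omega) z hz]
    refine Finset.sum_congr rfl fun i hi => ?_
    rw [ih (ξ - single i 1) (by have := degree_tsub_single_add_one_s19 hi; omega) hz]
end
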